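/- Let X be a real Banach space with dim X ≥ 2. Then 1 ≤ Ω′(X) ≤ 8/5. -/
import Mathlib


/-- The generalized orthogonal geometric constant
`Ω′(X) = sup{ (‖x+2y‖² + ‖2x+y‖²)/(5‖x+y‖²) : x, y ∈ X, (x,y) ≠ (0,0), x ⊥_I y }`. -/
noncomputable def OmegaPrime (X : Type*) [NormedAddCommGroup X] [NormedSpace ℝ X] : ℝ :=
  sSup { r : ℝ | ∃ x y : X, (x, y) ≠ (0, 0) ∧ ‖x + y‖ = ‖x - y‖ ∧
    r = (‖x + (2 : ℝ) • y‖ ^ 2 + ‖(2 : ℝ) • x + y‖ ^ 2) / (5 * ‖x + y‖ ^ 2) }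

lemma omegaSet_bound {X : Type*} [NormedAddCommGroup X] [NormedSpace ℝ X] :
    ∀ r ∈ { r : ℝ | ∃ x y : X, (x, y) ≠ (0, 0) ∧ ‖x + y‖ = ‖x - y‖ ∧
      r = (‖x + (2 : ℝ) • y‖ ^ 2 + ‖(2 : ℝ) • x + y‖ ^ 2) / (5 * ‖x + y‖ ^ 2) },
      r ≤ 8 / 5 := by
  rintro r ⟨x, y, hne, hiso, rfl⟩
  have hxy : x + y ≠ 0 := by
    intro h
    have h0 : ‖x - y‖ = 0 := by rw [← hiso, h, norm_zero]
    have hxeq : x = y := sub_eq_zero.mp (norm_eq_zero.mp h0)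
    have hy : y + y = 0 := by rw [hxeq] at h; exact h
    have hy0 : y = 0 := by
      have : (2 : ℝ) • y = 0 := by rw [two_smul]; exact hy
      simpa using this
    exact hne (by simp [hxeq, hy0])
  have hpos : (0 : ℝ) < ‖x + y‖ := norm_pos_iff.mpr hxy
  have h1 : ‖x + (2 : ℝ) • y‖ ≤ 2 * ‖x + y‖ := by
    have e : x + (2 : ℝ) • y = (3/2 : ℝ) • (x + y) - (1/2 : ℝ) • (x - y) := by module
    calc ‖x + (2 : ℝ) • y‖ ≤ ‖(3/2 : ℝ) • (x + y)‖ + ‖(1/2 : ℝ) • (x - y)‖ := by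
          rw [e]; exact norm_sub_le _ _
      _ = (3/2) * ‖x + y‖ + (1/2) * ‖x - y‖ := by
          rw [norm_smul, norm_smul]; norm_num
      _ = 2 * ‖x + y‖ := by rw [← hiso]; ring
  have h2 : ‖(2 : ℝ) • x + y‖ ≤ 2 * ‖x + y‖ := by
    have e : (2 : ℝ) • x + y = (3/2 : ℝ) • (x + y) + (1/2 : ℝ) • (x - y) := by module
    calc ‖(2 : ℝ) • x + y‖ ≤ ‖(3/2 : ℝ) • (x + y)‖ + ‖(1/2 : ℝ) • (x - y)‖ := by
          rw [e]; exact norm_add_le _ _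
      _ = (3/2) * ‖x + y‖ + (1/2) * ‖x - y‖ := by
          rw [norm_smul, norm_smul]; norm_num
      _ = 2 * ‖x + y‖ := by rw [← hiso]; ring
  rw [div_le_iff₀ (by positivity)]
  nlinarith [norm_nonneg (x + (2 : ℝ) • y), norm_nonneg ((2 : ℝ) • x + y),
    sq_nonneg (‖x + (2 : ℝ) • y‖ - 2 * ‖x + y‖), sq_nonneg (‖(2 : ℝ) • x + y‖ - 2 * ‖x + y‖)]

/-- For a real Banach space `X` with `dim X ≥ 2`, one has `1 ≤ Ω′(X) ≤ 8/5`. -/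
theorem one_le_omegaPrime_le_eight_fifths
    {X : Type*} [NormedAddCommGroup X] [NormedSpace ℝ X] [CompleteSpace X]
    (hdim : 2 ≤ Module.rank ℝ X) :
    1 ≤ OmegaPrime X ∧ OmegaPrime X ≤ 8 / 5 := by
  have hnt : Nontrivial X := by
    rw [← rank_pos_iff_nontrivial (R := ℝ)]
    exact lt_of_lt_of_le (by norm_num) hdim
  obtain ⟨x, hx⟩ := exists_ne (0 : X)
  have hxn : (0 : ℝ) < ‖x‖ := norm_pos_iff.mpr hx
  have hmem : (1 : ℝ) ∈ { r : ℝ | ∃ x y : X, (x, y) ≠ (0, 0) ∧ ‖x + y‖ = ‖x - y‖ ∧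
      r = (‖x + (2 : ℝ) • y‖ ^ 2 + ‖(2 : ℝ) • x + y‖ ^ 2) / (5 * ‖x + y‖ ^ 2) } := by
    refine ⟨x, 0, by simp [hx], by simp, ?_⟩
    rw [smul_zero, add_zero, add_zero, norm_smul]
    have : ‖(2:ℝ)‖ = 2 := by norm_num
    rw [this]
    field_simp
    ring
  constructor
  · exact le_csSup ⟨8/5, omegaSet_bound⟩ hmem
  · exact Real.sSup_le omegaSet_bound (by norm_num)
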